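/- arXiv:math/0404080 — 3 statements merged into one kernel-verified Lean document; each statement's English description precedes it below -/
import Mathlib

section
/- Let $\mu$ be a probability measure on $\mathbb{R}^d$ with finite second moments satisfying $\mu = \sum_{k=1}^l p_k\, \mu \circ S_k^{-1}$ with $S_k(x) = A x + b_k$, $\|A\| < 1$. Viewing matrices as vectors in $\mathbb{R}^d \otimes \mathbb{R}^d$, the covariance matrix of $\mu$ equals $(I \otimes I - A \otimes A)^{-1}$ applied to the covariance matrix of the discrete random vector $\mathcal{B}$ taking value $b_k$ with probability $p_k$. -/
open MeasureTheory Matrix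
open scoped Matrix.Norms.L2Operator Kronecker


lemma kron_vec_aux {d : ℕ} (A M : Matrix (Fin d) (Fin d) ℝ) :
    (A ⊗ₖ A).mulVec (fun q : Fin d × Fin d => M q.1 q.2)
      = fun q : Fin d × Fin d => (A * M * Aᵀ) q.1 q.2 := by
  funext q
  obtain ⟨i, j⟩ := q
  simp only [Matrix.mulVec, dotProduct, Matrix.kroneckerMap_apply, Fintype.sum_prod_type,
    Matrix.mul_apply, Matrix.transpose_apply, Finset.sum_mul]
  rw [Finset.sum_comm]
  exact Finset.sum_congr rfl fun a _ => Finset.sum_congr rfl fun c _ => by ring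

lemma conj_entry_aux {d : ℕ} (A X : Matrix (Fin d) (Fin d) ℝ) (i j : Fin d) :
    (A * X * Aᵀ) i j = ∑ a, ∑ c, A i a * A j c * X a c := by
  simp only [Matrix.mul_apply, Matrix.transpose_apply, Finset.sum_mul]
  rw [Finset.sum_comm]
  exact Finset.sum_congr rfl fun a _ => Finset.sum_congr rfl fun c _ => by ring

lemma isUnit_one_sub_kron_aux {d : ℕ} (A : Matrix (Fin d) (Fin d) ℝ) (hA : ‖A‖ < 1) :
    IsUnit ((1 : Matrix (Fin d × Fin d) (Fin d × Fin d) ℝ) - A ⊗ₖ A) := by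
  rw [← Matrix.mulVec_injective_iff_isUnit]
  have key : ∀ u : Fin d × Fin d → ℝ,
      ((1 : Matrix (Fin d × Fin d) (Fin d × Fin d) ℝ) - A ⊗ₖ A).mulVec u = 0 → u = 0 := by
    intro u hu
    set M : Matrix (Fin d) (Fin d) ℝ := Matrix.of fun i j => u (i, j) with hMdef
    have hu' : u = fun q : Fin d × Fin d => M q.1 q.2 := by
      funext q; show u q = u (q.1, q.2); rw [Prod.mk.eta]
    rw [hu', Matrix.sub_mulVec, Matrix.one_mulVec, kron_vec_aux] at hu
    have hM : M = A * M * Aᵀ := by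
      ext i j
      have := congrFun hu (i, j)
      simpa [sub_eq_zero] using this
    have hAt : ‖Aᵀ‖ = ‖A‖ := by
      rw [← Matrix.conjTranspose_eq_transpose_of_trivial, Matrix.l2_opNorm_conjTranspose]
    have hnorm : ‖M‖ ≤ ‖A‖ * ‖M‖ * ‖A‖ := by
      calc ‖M‖ = ‖A * M * Aᵀ‖ := by rw [← hM]
        _ ≤ ‖A * M‖ * ‖Aᵀ‖ := Matrix.l2_opNorm_mul _ _
        _ ≤ ‖A‖ * ‖M‖ * ‖Aᵀ‖ := by
            have := Matrix.l2_opNorm_mul A M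
            exact mul_le_mul_of_nonneg_right this (norm_nonneg _)
        _ = ‖A‖ * ‖M‖ * ‖A‖ := by rw [hAt]
    have hM0 : M = 0 := by
      by_contra h
      have hpos : 0 < ‖M‖ := norm_pos_iff.mpr h
      have h1 : ‖A‖ * ‖A‖ < 1 := by nlinarith [norm_nonneg A]
      nlinarith [h1, hpos, hnorm, mul_lt_mul_of_pos_right h1 hpos]
    rw [hu', hM0]
    funext q; simp
  intro v w h
  have h2 : ((1 : Matrix (Fin d × Fin d) (Fin d × Fin d) ℝ) - A ⊗ₖ A).mulVec (v - w) = 0 := by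
    rw [Matrix.mulVec_sub, h, sub_self]
  exact sub_eq_zero.mp (key _ h2)

theorem self_affine_covariance_kronecker_formula {d l : ℕ}
    (A : Matrix (Fin d) (Fin d) ℝ) (b : Fin l → (Fin d → ℝ))
    (p : Fin l → ℝ) (hA : ‖A‖ < 1) (hp : ∀ k, 0 ≤ p k)
    (hsum : ∑ k, p k = 1)
    (μ : Measure (Fin d → ℝ)) [IsProbabilityMeasure μ]
    (S : Fin l → (Fin d → ℝ) → (Fin d → ℝ))
    (hS : ∀ k x, S k x = A.mulVec x + b k)
    (hinv : μ = ∑ k, (ENNReal.ofReal (p k)) • μ.map (S k))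
    (hmom2 : ∀ i j, Integrable (fun x => x i * x j) μ)
    (hmom1 : ∀ i, Integrable (fun x => x i) μ)
    (m : Fin d → ℝ) (hm : m = fun i => ∫ x, x i ∂μ)
    (C Sg : Matrix (Fin d) (Fin d) ℝ)
    (hC : C = Matrix.of fun i j => ∫ x, (x i - m i) * (x j - m j) ∂μ)
    (hSg : Sg = ∑ k, p k • Matrix.vecMulVec (b k) (b k)
          - Matrix.vecMulVec (∑ k, p k • b k) (∑ k, p k • b k)) :
    (fun q : Fin d × Fin d => C q.1 q.2)
      = ((1 : Matrix (Fin d × Fin d) (Fin d × Fin d) ℝ) - A ⊗ₖ A)⁻¹.mulVec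
          (fun q : Fin d × Fin d => Sg q.1 q.2) := by
  -- measurability of the affine maps
  have hSmeas : ∀ k, Measurable (S k) := by
    intro k
    have h1 : S k = fun x => A.mulVecLin x + b k := by
      funext x; simp [hS, Matrix.mulVecLin_apply]
    rw [h1]
    exact (A.mulVecLin.continuous_of_finiteDimensional.measurable).add_const _
  -- key transfer identity for integrals
  have hkey : ∀ f : (Fin d → ℝ) → ℝ, Measurable f → Integrable f μ →
      ∫ x, f x ∂μ = ∑ k, p k * ∫ x, f (S k x) ∂μ := by
    intro f hfm hf
    have hle : ∀ k, (ENNReal.ofReal (p k)) • μ.map (S k) ≤ μ := by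
      intro k
      conv_rhs => rw [hinv]
      refine Measure.le_iff.mpr fun s hs => ?_
      rw [Measure.finset_sum_apply]
      exact Finset.single_le_sum (f := fun k => ((ENNReal.ofReal (p k)) • μ.map (S k)) s)
        (fun i _ => zero_le) (Finset.mem_univ k)
    have hintk : ∀ k, Integrable f ((ENNReal.ofReal (p k)) • μ.map (S k)) :=
      fun k => hf.mono_measure (hle k)
    calc ∫ x, f x ∂μ
        = ∑ k, ∫ x, f x ∂((ENNReal.ofReal (p k)) • μ.map (S k)) := by
          conv_lhs => rw [hinv]
          exact integral_finset_sum_measure (fun k _ => hintk k)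
      _ = ∑ k, p k * ∫ x, f (S k x) ∂μ := by
          refine Finset.sum_congr rfl fun k _ => ?_
          rw [integral_smul_measure]
          by_cases hpk : p k = 0
          · simp [hpk]
          · rw [integral_map (hSmeas k).aemeasurable hfm.aestronglyMeasurable]
            simp [ENNReal.toReal_ofReal (hp k), smul_eq_mul]
  have hmi : ∀ i, ∫ x, x i ∂μ = m i := fun i => (congrFun hm i).symm
  -- first moments of A x
  have hAmInt : ∀ i, Integrable (fun x : Fin d → ℝ => (A.mulVec x) i) μ := by
    intro i
    have h1 : (fun x : Fin d → ℝ => (A.mulVec x) i) = fun x => ∑ j, A i j * x j := by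
      funext x; simp [Matrix.mulVec, dotProduct]
    rw [h1]
    exact integrable_finset_sum _ (fun j _ => (hmom1 j).const_mul _)
  have hAmVal : ∀ i, ∫ x, (A.mulVec x) i ∂μ = (A.mulVec m) i := by
    intro i
    have h1 : (fun x : Fin d → ℝ => (A.mulVec x) i) = fun x => ∑ j, A i j * x j := by
      funext x; simp [Matrix.mulVec, dotProduct]
    rw [h1, integral_finset_sum _ (fun j _ => (hmom1 j).const_mul _)]
    simp only [Matrix.mulVec, dotProduct]
    exact Finset.sum_congr rfl fun j _ => by rw [integral_const_mul, hmi]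
  -- mean recursion
  have hm_eq : ∀ i, m i = (A.mulVec m) i + (∑ k, p k * b k i) := by
    intro i
    have h0 := hkey (fun x => x i) (measurable_pi_apply i) (hmom1 i)
    rw [hmi i] at h0
    have h1 : ∀ k, ∫ x, (S k x) i ∂μ = (A.mulVec m) i + b k i := by
      intro k
      have h2 : (fun x => (S k x) i) = fun x => (A.mulVec x) i + b k i := by
        funext x; simp [hS]
      rw [h2, integral_add (hAmInt i) (integrable_const _), hAmVal i, integral_const]
      simp
    rw [h0]
    simp only [h1]
    rw [Finset.sum_congr rfl fun k _ => mul_add (p k) _ _, Finset.sum_add_distrib,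
      ← Finset.sum_mul, hsum, one_mul]
  -- second moment matrix
  set Mm : Matrix (Fin d) (Fin d) ℝ := Matrix.of (fun i j => ∫ x, x i * x j ∂μ) with hMmdef
  have hMmi : ∀ i j, Mm i j = ∫ x, x i * x j ∂μ := fun i j => rfl
  -- quadratic term
  have hquadeq : ∀ i j, (fun x : Fin d → ℝ => (A.mulVec x) i * (A.mulVec x) j)
      = fun x => ∑ a, ∑ c, A i a * A j c * (x a * x c) := by
    intro i j
    funext x
    simp only [Matrix.mulVec, dotProduct]
    rw [Finset.sum_mul_sum]
    exact Finset.sum_congr rfl fun a _ => Finset.sum_congr rfl fun c _ => by ring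
  have hquadInt : ∀ i j, Integrable (fun x : Fin d → ℝ => (A.mulVec x) i * (A.mulVec x) j) μ := by
    intro i j
    rw [hquadeq]
    exact integrable_finset_sum _ fun a _ =>
      integrable_finset_sum _ fun c _ => (hmom2 a c).const_mul _
  have hquadVal : ∀ i j, ∫ x, (A.mulVec x) i * (A.mulVec x) j ∂μ = (A * Mm * Aᵀ) i j := by
    intro i j
    rw [hquadeq, integral_finset_sum _ (fun a _ =>
      integrable_finset_sum _ fun c _ => (hmom2 a c).const_mul _), conj_entry_aux]
    refine Finset.sum_congr rfl fun a _ => ?_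
    rw [integral_finset_sum _ (fun c _ => (hmom2 a c).const_mul _)]
    exact Finset.sum_congr rfl fun c _ => by rw [integral_const_mul]; rfl
  -- second moment recursion
  have hMrec : ∀ i j, Mm i j = (A * Mm * Aᵀ) i j
      + (A.mulVec m) i * (∑ k, p k * b k j) + (∑ k, p k * b k i) * (A.mulVec m) j
      + (∑ k, p k * (b k i * b k j)) := by
    intro i j
    have h0 := hkey (fun x => x i * x j)
      ((measurable_pi_apply i).mul (measurable_pi_apply j)) (hmom2 i j)
    have h1 : ∀ k, ∫ x, (S k x) i * (S k x) j ∂μ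
        = (A * Mm * Aᵀ) i j + (A.mulVec m) i * b k j + b k i * (A.mulVec m) j
          + b k i * b k j := by
      intro k
      have h2 : (fun x => (S k x) i * (S k x) j)
          = fun x => ((A.mulVec x) i * (A.mulVec x) j + (A.mulVec x) i * b k j
            + b k i * (A.mulVec x) j) + b k i * b k j := by
        funext x; simp only [hS, Pi.add_apply]; ring
      have I1 := hquadInt i j
      have I2 := (hAmInt i).mul_const (b k j)
      have I3 := (hAmInt j).const_mul (b k i)
      have I12 : Integrable (fun x : Fin d → ℝ =>
          (A.mulVec x) i * (A.mulVec x) j + (A.mulVec x) i * b k j) μ := I1.add I2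
      have I123 : Integrable (fun x : Fin d → ℝ =>
          (A.mulVec x) i * (A.mulVec x) j + (A.mulVec x) i * b k j
            + b k i * (A.mulVec x) j) μ := I12.add I3
      rw [h2, integral_add I123 (integrable_const _),
        integral_add I12 I3, integral_add I1 I2, hquadVal i j,
        integral_mul_const, integral_const_mul, hAmVal i, hAmVal j, integral_const]
      simp
    rw [hMmi, h0]
    simp only [h1]
    have e1 : ∑ k, p k * ((A * Mm * Aᵀ) i j + (A.mulVec m) i * b k j
        + b k i * (A.mulVec m) j + b k i * b k j)
        = (∑ k, p k) * (A * Mm * Aᵀ) i j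
          + (A.mulVec m) i * (∑ k, p k * b k j)
          + (∑ k, p k * b k i) * (A.mulVec m) j
          + (∑ k, p k * (b k i * b k j)) := by
      rw [Finset.sum_mul, Finset.mul_sum, Finset.sum_mul, ← Finset.sum_add_distrib,
        ← Finset.sum_add_distrib, ← Finset.sum_add_distrib]
      exact Finset.sum_congr rfl fun k _ => by ring
    rw [e1, hsum, one_mul]
  -- covariance entries
  have hCval : ∀ i j, C i j = Mm i j - m i * m j := by
    intro i j
    have h2 : (fun x : Fin d → ℝ => (x i - m i) * (x j - m j))
        = fun x => (x i * x j - m i * x j) - (m j * x i - m i * m j) := by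
      funext x; ring
    have I1 := hmom2 i j
    have I2 := (hmom1 j).const_mul (m i)
    have I3 := (hmom1 i).const_mul (m j)
    have I12 : Integrable (fun x : Fin d → ℝ => x i * x j - m i * x j) μ := I1.sub I2
    have I34 : Integrable (fun x : Fin d → ℝ => m j * x i - m i * m j) μ :=
      I3.sub (integrable_const _)
    rw [hC]
    show (∫ x, (x i - m i) * (x j - m j) ∂μ) = _
    rw [h2, integral_sub I12 I34, integral_sub I1 I2,
      integral_sub I3 (integrable_const _),
      integral_const_mul, integral_const_mul, integral_const, hmi, hmi, hMmi]
    simp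
    ring
  -- Sg entries
  have hSgval : ∀ i j, Sg i j = (∑ k, p k * (b k i * b k j))
      - (∑ k, p k * b k i) * (∑ k, p k * b k j) := by
    intro i j
    rw [hSg]
    simp only [Matrix.sub_apply, Matrix.sum_apply, Matrix.smul_apply,
      Matrix.vecMulVec_apply, smul_eq_mul, Finset.sum_apply, Pi.smul_apply]
  -- the key matrix identity
  have claim : ∀ i j, C i j - (A * C * Aᵀ) i j = Sg i j := by
    intro i j
    have hACA : (A * C * Aᵀ) i j = (A * Mm * Aᵀ) i j - (A.mulVec m) i * (A.mulVec m) j := by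
      rw [conj_entry_aux, conj_entry_aux]
      have e2 : ∀ a c, A i a * A j c * C a c
          = A i a * A j c * Mm a c - (A i a * m a) * (A j c * m c) := by
        intro a c; rw [hCval]; ring
      calc ∑ a, ∑ c, A i a * A j c * C a c
          = (∑ a, ∑ c, A i a * A j c * Mm a c)
            - ∑ a, ∑ c, (A i a * m a) * (A j c * m c) := by
            rw [← Finset.sum_sub_distrib]
            refine Finset.sum_congr rfl fun a _ => ?_
            rw [← Finset.sum_sub_distrib]
            exact Finset.sum_congr rfl fun c _ => e2 a c
        _ = (∑ a, ∑ c, A i a * A j c * Mm a c)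
            - (A.mulVec m) i * (A.mulVec m) j := by
            congr 1
            rw [← Finset.sum_mul_sum]
            simp [Matrix.mulVec, dotProduct]
    rw [hCval i j, hACA, hSgval i j, hMrec i j, hm_eq i, hm_eq j]
    ring
  -- conclude
  have hunit := isUnit_one_sub_kron_aux A hA
  have hdet : IsUnit ((1 : Matrix (Fin d × Fin d) (Fin d × Fin d) ℝ) - A ⊗ₖ A).det :=
    (Matrix.isUnit_iff_isUnit_det _).mp hunit
  have hKC : ((1 : Matrix (Fin d × Fin d) (Fin d × Fin d) ℝ) - A ⊗ₖ A).mulVec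
      (fun q : Fin d × Fin d => C q.1 q.2) = fun q : Fin d × Fin d => Sg q.1 q.2 := by
    rw [Matrix.sub_mulVec, Matrix.one_mulVec, kron_vec_aux]
    funext q
    exact claim q.1 q.2
  rw [← hKC, Matrix.mulVec_mulVec, Matrix.nonsing_inv_mul _ hdet, Matrix.one_mulVec]
end

section
/- Let $\mu$ be a probability measure on $\mathbb{R}^d$ with finite second moments satisfying $\mu = \sum_{k=1}^l p_k\, \mu \circ S_k^{-1}$ with $S_k(x) = A x + b_k$ where $A$ is diagonal with $\|A\| < 1$. Then for $i \neq j$, the coordinates $x_i$ and $x_j$ are uncorrelated under $\mu$ (i.e. $\int x_i x_j\, d\mu = \int x_i\, d\mu \int x_j\, d\mu$) if and only if $\sum_{k=1}^l p_k (b_k)_i (b_k)_j = (\sum_{k=1}^l p_k (b_k)_i)(\sum_{k=1}^l p_k (b_k)_j)$. -/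
open MeasureTheory Matrix
open scoped Matrix.Norms.L2Operator

theorem self_affine_diagonal_uncorrelated_iff {d l : ℕ}
    (a : Fin d → ℝ) (A : Matrix (Fin d) (Fin d) ℝ)
    (hAdiag : A = Matrix.diagonal a) (hA : ‖A‖ < 1)
    (b : Fin l → (Fin d → ℝ)) (p : Fin l → ℝ)
    (hp : ∀ k, 0 ≤ p k) (hsum : ∑ k, p k = 1)
    (μ : Measure (Fin d → ℝ)) [IsProbabilityMeasure μ]
    (S : Fin l → (Fin d → ℝ) → (Fin d → ℝ))
    (hS : ∀ k x, S k x = A.mulVec x + b k)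
    (hinv : μ = ∑ k, (ENNReal.ofReal (p k)) • μ.map (S k))
    (hmom2 : ∀ i j, Integrable (fun x => x i * x j) μ)
    (hmom1 : ∀ i, Integrable (fun x => x i) μ)
    (i j : Fin d) (hij : i ≠ j) :
    (∫ x, x i * x j ∂μ) = (∫ x, x i ∂μ) * (∫ x, x j ∂μ)
      ↔ (∑ k, p k * (b k i * b k j))
          = (∑ k, p k * b k i) * (∑ k, p k * b k j) := by
  classical
  -- coordinatewise form of S
  have hScoord : ∀ k x (i' : Fin d), S k x i' = a i' * x i' + b k i' := by
    intro k x i'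
    rw [hS, Pi.add_apply, hAdiag, Matrix.mulVec_diagonal]
  -- |a i'| < 1 for each coordinate
  have habs : ∀ i' : Fin d, |a i'| < 1 := by
    intro i'
    have h := A.l2_opNorm_mulVec (EuclideanSpace.single i' (1 : ℝ))
    have hv : (EuclideanSpace.equiv (Fin d) ℝ).symm (A *ᵥ (EuclideanSpace.single i' (1 : ℝ)))
        = EuclideanSpace.single i' (a i') := by
      ext j'
      have e1 : ((EuclideanSpace.equiv (Fin d) ℝ).symm (A *ᵥ EuclideanSpace.single i' 1)) j'
          = a j' * (EuclideanSpace.single i' (1 : ℝ) : EuclideanSpace ℝ (Fin d)) j' := by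
        rw [hAdiag]; exact Matrix.mulVec_diagonal a _ j'
      rw [e1, EuclideanSpace.single_apply, EuclideanSpace.single_apply]
      by_cases h : j' = i' <;> simp [h]
    rw [hv, EuclideanSpace.norm_single, EuclideanSpace.norm_single] at h
    simp only [norm_one, mul_one, Real.norm_eq_abs] at h
    calc |a i'| ≤ ‖A‖ := h
    _ < 1 := hA
  -- measurability of S k
  have hSmeas : ∀ k, Measurable (S k) := by
    intro k
    have : S k = fun x => A.mulVec x + b k := funext (hS k)
    rw [this]
    exact (Measurable.add_const (by
      exact (A.mulVecLin.continuous_of_finiteDimensional).measurable) _)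
  -- transfer lemma
  have key : ∀ f : (Fin d → ℝ) → ℝ, Measurable f →
      (∀ k, Integrable (fun x => f (S k x)) μ) →
      ∫ x, f x ∂μ = ∑ k, p k * ∫ x, f (S k x) ∂μ := by
    intro f hf hInt
    have hIntMap : ∀ k, Integrable f (μ.map (S k)) := by
      intro k
      exact (integrable_map_measure hf.aestronglyMeasurable
        (hSmeas k).aemeasurable).mpr (hInt k)
    conv_lhs => rw [hinv]
    rw [integral_finset_sum_measure (fun k _ => (hIntMap k).smul_measure ENNReal.ofReal_ne_top)]
    refine Finset.sum_congr rfl fun k _ => ?_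
    rw [integral_smul_measure, ENNReal.toReal_ofReal (hp k),
      integral_map (hSmeas k).aemeasurable hf.aestronglyMeasurable]
    rfl
  set mi := ∫ x, x i ∂μ with hmi
  set mj := ∫ x, x j ∂μ with hmj
  set mij := ∫ x, x i * x j ∂μ with hmij
  set βi := ∑ k, p k * b k i with hβi
  set βj := ∑ k, p k * b k j with hβj
  set γ := ∑ k, p k * (b k i * b k j) with hγ
  -- first moment equation
  have eq1 : ∀ i' : Fin d, ∫ x, x i' ∂μ = a i' * ∫ x, x i' ∂μ + ∑ k, p k * b k i' := by
    intro i'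
    have hint : ∀ k, Integrable (fun x => (fun y => y i') (S k x)) μ := by
      intro k
      simp only [hScoord]
      exact ((hmom1 i').const_mul _).add (integrable_const _)
    have hk := key (fun y => y i') (measurable_pi_apply i') hint
    refine hk.trans ?_
    have hval : ∀ k : Fin l, ∫ x, S k x i' ∂μ = a i' * (∫ x, x i' ∂μ) + b k i' := by
      intro k
      simp only [hScoord]
      rw [integral_add (((hmom1 i').const_mul _)) (integrable_const _),
        integral_const_mul, integral_const]
      simp
    calc ∑ k, p k * ∫ x, S k x i' ∂μ
        = ∑ k, ((a i' * ∫ x, x i' ∂μ) * p k + p k * b k i') :=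
          Finset.sum_congr rfl fun k _ => by rw [hval k]; ring
      _ = (a i' * ∫ x, x i' ∂μ) * (∑ k, p k) + ∑ k, p k * b k i' := by
          rw [Finset.sum_add_distrib, ← Finset.mul_sum]
      _ = a i' * ∫ x, x i' ∂μ + ∑ k, p k * b k i' := by rw [hsum]; ring
  -- second moment equation
  have eq2 : mij = a i * a j * mij + a i * mi * βj + a j * mj * βi + γ := by
    have hexp : ∀ k, (fun x => (fun y => y i * y j) (S k x)) =
        fun x : Fin d → ℝ => a i * a j * (x i * x j) + a i * b k j * x i
          + a j * b k i * x j + b k i * b k j := by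
      intro k
      funext x
      simp only [hScoord]
      ring
    have hint : ∀ k, Integrable (fun x => (fun y => y i * y j) (S k x)) μ := by
      intro k
      rw [hexp k]
      exact ((((hmom2 i j).const_mul _).add ((hmom1 i).const_mul _)).add
        ((hmom1 j).const_mul _)).add (integrable_const _)
    have hval : ∀ k : Fin l, ∫ x, (fun y => y i * y j) (S k x) ∂μ =
        a i * a j * mij + a i * b k j * mi + a j * b k i * mj + b k i * b k j := by
      intro k
      rw [hexp k]
      have I1 : Integrable (fun x : Fin d → ℝ => a i * a j * (x i * x j)) μ :=
        (hmom2 i j).const_mul _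
      have I2 : Integrable (fun x : Fin d → ℝ => a i * b k j * x i) μ := (hmom1 i).const_mul _
      have I3 : Integrable (fun x : Fin d → ℝ => a j * b k i * x j) μ := (hmom1 j).const_mul _
      have I12 : Integrable (fun x : Fin d → ℝ =>
          a i * a j * (x i * x j) + a i * b k j * x i) μ := I1.add I2
      have I123 : Integrable (fun x : Fin d → ℝ =>
          a i * a j * (x i * x j) + a i * b k j * x i + a j * b k i * x j) μ := I12.add I3
      rw [integral_add I123 (integrable_const _), integral_add I12 I3, integral_add I1 I2,
        integral_const_mul, integral_const_mul, integral_const_mul, integral_const]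
      simp [hmi, hmj, hmij]
    have hmeas : Measurable (fun y : Fin d → ℝ => y i * y j) :=
      (measurable_pi_apply i).mul (measurable_pi_apply j)
    have hkey := key (fun y => y i * y j) hmeas hint
    have hfinal : ∑ k, p k * ∫ x, (fun y => y i * y j) (S k x) ∂μ
        = a i * a j * mij + a i * mi * βj + a j * mj * βi + γ := by
      calc ∑ k, p k * ∫ x, (fun y => y i * y j) (S k x) ∂μ
          = ∑ k, ((a i * a j * mij) * p k + (a i * mi) * (p k * b k j)
              + (a j * mj) * (p k * b k i) + p k * (b k i * b k j)) :=
            Finset.sum_congr rfl fun k _ => by rw [hval k]; ring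
        _ = (a i * a j * mij) * (∑ k, p k) + (a i * mi) * βj + (a j * mj) * βi + γ := by
            rw [Finset.sum_add_distrib, Finset.sum_add_distrib, Finset.sum_add_distrib,
              ← Finset.mul_sum, ← Finset.mul_sum, ← Finset.mul_sum, ← hβi, ← hβj, ← hγ]
        _ = a i * a j * mij + a i * mi * βj + a j * mj * βi + γ := by rw [hsum]; ring
    exact (hmij.trans hkey).trans hfinal
  have eq1i : mi = a i * mi + βi := eq1 i
  have eq1j : mj = a j * mj + βj := eq1 j
  -- key algebraic identity
  have keyid : γ - βi * βj = (1 - a i * a j) * (mij - mi * mj) := by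
    linear_combination (a i * mi + βi) * eq1j + mj * eq1i - eq2
  have hne : (1 : ℝ) - a i * a j ≠ 0 := by
    have h1 := abs_lt.mp (habs i)
    have h2 := abs_lt.mp (habs j)
    nlinarith [h1.1, h1.2, h2.1, h2.2]
  constructor
  · intro h
    have : γ - βi * βj = 0 := by rw [keyid, h]; ring
    linarith
  · intro h
    have : (1 - a i * a j) * (mij - mi * mj) = 0 := by rw [← keyid, h]; ring
    rcases mul_eq_zero.mp this with h' | h'
    · exact absurd h' hne
    · linarith
end

section
/- Let $\mu$ be the self-affine probability measure on the Sierpinski triangle satisfying $\mu = \sum_{k=1}^3 p_k\, \mu \circ S_k^{-1}$ with $S_1(x) = \frac{1}{2}x$, $S_2(x) = \frac{1}{2}x + (\frac{1}{2},0)$, $S_3(x) = \frac{1}{2}x + (\frac{1}{4}, \frac{\sqrt{3}}{4})$, with finite second moments. If $p_1 = p_2$, then $\int x_1 x_2\, d\mu = \int x_1\, d\mu \cdot \int x_2\, d\mu = \frac{\sqrt{3}}{4} p_3$. -/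
open MeasureTheory

theorem sierpinski_uncorrelated_of_p1_eq_p2 {p : Fin 3 → ℝ}
    (hp : ∀ k, 0 ≤ p k) (hsum : ∑ k, p k = 1) (hpeq : p 0 = p 1)
    (b : Fin 3 → (Fin 2 → ℝ))
    (hb : b = ![![0, 0], ![1/2, 0], ![1/4, Real.sqrt 3 / 4]])
    (S : Fin 3 → (Fin 2 → ℝ) → (Fin 2 → ℝ))
    (hS : ∀ k x, S k x = (1/2 : ℝ) • x + b k)
    (μ : Measure (Fin 2 → ℝ)) [IsProbabilityMeasure μ]
    (hinv : μ = ∑ k, (ENNReal.ofReal (p k)) • μ.map (S k))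
    (hmom2 : ∀ i j, Integrable (fun x => x i * x j) μ)
    (hmom1 : ∀ i, Integrable (fun x => x i) μ) :
    (∫ x, x 0 * x 1 ∂μ) = (∫ x, x 0 ∂μ) * (∫ x, x 1 ∂μ)
      ∧ (∫ x, x 0 * x 1 ∂μ) = (Real.sqrt 3 / 4) * p 2 := by
  have hsum3 : p 0 + p 1 + p 2 = 1 := by simpa [Fin.sum_univ_three] using hsum
  have hb00 : b 0 0 = 0 := by rw [hb]; norm_num
  have hb01 : b 0 1 = 0 := by rw [hb]; norm_num
  have hb10 : b 1 0 = 1/2 := by rw [hb]; norm_num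
  have hb11 : b 1 1 = 0 := by rw [hb]; norm_num
  have hb20 : b 2 0 = 1/4 := by rw [hb]; norm_num; rfl
  have hb21 : b 2 1 = Real.sqrt 3 / 4 := by rw [hb]; norm_num; rfl
  set m0 := ∫ x, x 0 ∂μ with hm0def
  set m1 := ∫ x, x 1 ∂μ with hm1def
  set c := ∫ x, x 0 * x 1 ∂μ with hcdef
  -- measurability of S k
  have hSm : ∀ k, Measurable (S k) := by
    intro k
    have : S k = fun x => (1/2 : ℝ) • x + b k := funext (hS k)
    rw [this]
    exact (measurable_id.const_smul ((1:ℝ)/2)).add_const (b k)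
  have hSx : ∀ k x i, S k x i = x i / 2 + b k i := by
    intro k x i
    rw [hS]
    simp [Pi.add_apply, Pi.smul_apply]
    ring
  -- integrability of the canonical quadratic form
  have hintble : ∀ r s t u : ℝ,
      Integrable (fun x => r * (x 0 * x 1) + s * x 1 + t * x 0 + u) μ := by
    intro r s t u
    have h1 : Integrable (fun x => r * (x 0 * x 1)) μ := (hmom2 0 1).const_mul r
    have h2 : Integrable (fun x => s * x 1) μ := (hmom1 1).const_mul s
    have h3 : Integrable (fun x => t * x 0) μ := (hmom1 0).const_mul t
    have h12 : Integrable (fun x => r * (x 0 * x 1) + s * x 1) μ := h1.add h2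
    have h123 : Integrable (fun x => r * (x 0 * x 1) + s * x 1 + t * x 0) μ := h12.add h3
    exact h123.add (integrable_const u)
  -- integral of the canonical quadratic form
  have intlin : ∀ r s t u : ℝ,
      ∫ x, (r * (x 0 * x 1) + s * x 1 + t * x 0 + u) ∂μ = r * c + s * m1 + t * m0 + u := by
    intro r s t u
    have h1 : Integrable (fun x => r * (x 0 * x 1)) μ := (hmom2 0 1).const_mul r
    have h2 : Integrable (fun x => s * x 1) μ := (hmom1 1).const_mul s
    have h3 : Integrable (fun x => t * x 0) μ := (hmom1 0).const_mul t
    have h12 : Integrable (fun x => r * (x 0 * x 1) + s * x 1) μ := h1.add h2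
    have h123 : Integrable (fun x => r * (x 0 * x 1) + s * x 1 + t * x 0) μ := h12.add h3
    rw [integral_add h123 (integrable_const u), integral_add h12 h3, integral_add h1 h2,
      integral_const_mul, integral_const_mul, integral_const_mul, integral_const]
    simp [measure_univ]
    rfl
  -- the self-similarity step
  have step : ∀ f : (Fin 2 → ℝ) → ℝ, Measurable f →
      (∀ k, Integrable (fun x => f (S k x)) μ) →
      ∫ x, f x ∂μ = ∑ k, p k * ∫ x, f (S k x) ∂μ := by
    intro f hf hint
    conv_lhs => rw [hinv]
    rw [integral_finset_sum_measure]
    · refine Finset.sum_congr rfl fun k _ => ?_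
      rw [integral_smul_measure,
        integral_map (hSm k).aemeasurable hf.aestronglyMeasurable,
        ENNReal.toReal_ofReal (hp k), smul_eq_mul]
    · intro k _
      exact (((integrable_map_measure hf.aestronglyMeasurable
        (hSm k).aemeasurable).mpr (hint k)).smul_measure ENNReal.ofReal_ne_top)
  -- first moment equation for coordinate 0
  have e0 : m0 = ∑ k, p k * ((1/2) * m0 + b k 0) := by
    have hcmp : ∀ k x, (0:ℝ) * (x 0 * x 1) + 0 * x 1 + (1/2) * x 0 + b k 0 = S k x 0 := by
      intro k x; rw [hSx]; ring
    have h := step (fun x => x 0) (measurable_pi_apply 0)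
      (fun k => (hintble 0 0 (1/2) (b k 0)).congr (ae_of_all _ fun x => hcmp k x))
    calc m0 = ∑ k, p k * ∫ x, (fun y : Fin 2 → ℝ => y 0) (S k x) ∂μ := h
      _ = ∑ k, p k * ((1/2) * m0 + b k 0) := by
          refine Finset.sum_congr rfl fun k _ => ?_
          have h' : (fun x => (fun y : Fin 2 → ℝ => y 0) (S k x)) =ᵐ[μ]
              (fun x => (0:ℝ) * (x 0 * x 1) + 0 * x 1 + (1/2) * x 0 + b k 0) :=
            ae_of_all _ fun x => (hcmp k x).symm
          rw [integral_congr_ae h', intlin]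
          ring
  -- first moment equation for coordinate 1
  have e1 : m1 = ∑ k, p k * ((1/2) * m1 + b k 1) := by
    have hcmp : ∀ k x, (0:ℝ) * (x 0 * x 1) + (1/2) * x 1 + 0 * x 0 + b k 1 = S k x 1 := by
      intro k x; rw [hSx]; ring
    have h := step (fun x => x 1) (measurable_pi_apply 1)
      (fun k => (hintble 0 (1/2) 0 (b k 1)).congr (ae_of_all _ fun x => hcmp k x))
    calc m1 = ∑ k, p k * ∫ x, (fun y : Fin 2 → ℝ => y 1) (S k x) ∂μ := h
      _ = ∑ k, p k * ((1/2) * m1 + b k 1) := by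
          refine Finset.sum_congr rfl fun k _ => ?_
          have h' : (fun x => (fun y : Fin 2 → ℝ => y 1) (S k x)) =ᵐ[μ]
              (fun x => (0:ℝ) * (x 0 * x 1) + (1/2) * x 1 + 0 * x 0 + b k 1) :=
            ae_of_all _ fun x => (hcmp k x).symm
          rw [integral_congr_ae h', intlin]
          ring
  -- second moment equation
  have ec : c = ∑ k, p k * ((1/4) * c + (b k 0 / 2) * m1 + (b k 1 / 2) * m0
      + b k 0 * b k 1) := by
    have hcmp : ∀ k x, (1/4:ℝ) * (x 0 * x 1) + (b k 0 / 2) * x 1 + (b k 1 / 2) * x 0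
        + b k 0 * b k 1 = S k x 0 * S k x 1 := by
      intro k x; rw [hSx, hSx]; ring
    have h := step (fun x => x 0 * x 1)
      ((measurable_pi_apply 0).mul (measurable_pi_apply 1))
      (fun k => (hintble (1/4) (b k 0 / 2) (b k 1 / 2) (b k 0 * b k 1)).congr
        (ae_of_all _ fun x => hcmp k x))
    calc c = ∑ k, p k * ∫ x, (fun y : Fin 2 → ℝ => y 0 * y 1) (S k x) ∂μ := h
      _ = ∑ k, p k * ((1/4) * c + (b k 0 / 2) * m1 + (b k 1 / 2) * m0 + b k 0 * b k 1) := by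
          refine Finset.sum_congr rfl fun k _ => ?_
          have h' : (fun x => (fun y : Fin 2 → ℝ => y 0 * y 1) (S k x)) =ᵐ[μ]
              (fun x => (1/4:ℝ) * (x 0 * x 1) + (b k 0 / 2) * x 1 + (b k 1 / 2) * x 0
                + b k 0 * b k 1) :=
            ae_of_all _ fun x => (hcmp k x).symm
          rw [integral_congr_ae h', intlin]
  simp only [Fin.sum_univ_three, hb00, hb01, hb10, hb11, hb20, hb21] at e0 e1 ec
  have hm0 : m0 = 1/2 := by
    linear_combination 2*e0 + (m0 + 1/2)*hsum3 - (1/2)*hpeq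
  have hm1 : m1 = Real.sqrt 3 / 2 * p 2 := by
    linear_combination 2*e1 + m1*hsum3
  rw [hm0, hm1] at ec
  have hc : c = Real.sqrt 3 / 4 * p 2 := by
    linear_combination (4/3)*ec + (c/3 + Real.sqrt 3 * p 2/12)*hsum3
      - (Real.sqrt 3 * p 2/12)*hpeq
  constructor
  · rw [hc, hm0, hm1]
    ring
  · exact hc
end
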